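/- arXiv:1104.4099 — 2 statements merged into one kernel-verified Lean document; each statement's English description precedes it below -/
import Mathlib

section
/- Let n ≥ 3. For permutations π, τ ∈ S_n define D(π,τ) = des(π τ⁻¹), the number of descents of π τ⁻¹, giving an n!×n! real matrix D_n. Then D_n satisfies the polynomial identity D_n·(D_n − C(n,2)(n-1)!·I)·(D_n + (n-1)!·I) = 0. -/
/-!
`D` is the group matrix `π τ ↦ des (π τ⁻¹)` of `S_n`, so `D²` is the group matrix of the
convolution `des ⋆ des` and `J * D = (∑ des) • J` for the all-ones matrix `J`. Writing `des` as a
sum of indicators of descents at adjacent positions, `(des ⋆ des) g + (n-1)! des g` turns out to be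
independent of `g`: in each summand, left multiplication by an adjacent transposition pairs the
permutations `t` for which `g t⁻¹` has a descent at the given place with those for which it has
not, except for the `(n-2)!` permutations sending the two positions onto the two values. Hence
`D² + (n-1)! D = c J`, and `D (D + (n-1)! I) (D - C(n,2) (n-1)! I) = c J (D - C(n,2) (n-1)! I) = 0`.
-/

open Finset Equiv
open scoped Nat

/-- The number of descents of a permutation of `Fin n`. -/
def desCount {n : ℕ} (σ : Equiv.Perm (Fin n)) : ℕ :=
  (Finset.univ.filter
    (fun p : Fin n × Fin n => (p.2 : ℕ) = (p.1 : ℕ) + 1 ∧ σ p.2 < σ p.1)).card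

theorem two_mul_card_filter_of_involutive {α : Type*} {s : Finset α} {p : α → Prop}
    [DecidablePred p] {f : α → α} (hf : Function.Involutive f) (hs : ∀ x ∈ s, f x ∈ s)
    (hp : ∀ x ∈ s, p (f x) ↔ ¬p x) : 2 * #{x ∈ s | p x} = #s := by
  have hswap : #{x ∈ s | p x} = #{x ∈ s | ¬p x} := by
    refine card_nbij' f f (fun x hx => ?_) (fun x hx => ?_) (fun x _ => hf x) (fun x _ => hf x)
    · simp only [coe_filter, Set.mem_ofPred_eq] at hx ⊢
      exact ⟨hs x hx.1, by simpa [hp x hx.1] using hx.2⟩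
    · simp only [coe_filter, Set.mem_ofPred_eq] at hx ⊢
      refine ⟨hs x hx.1, ?_⟩
      rw [hp x hx.1]; exact hx.2
  rw [two_mul]
  nth_rewrite 2 [hswap]
  exact card_filter_add_card_filter_not p

section Perm

variable {α : Type*} [Fintype α] [DecidableEq α]

theorem card_perm_apply_eq_and_apply_eq {a c b d : α} (hac : a ≠ c)
    (hbd : b ≠ d) : #{t : Perm α | t a = b ∧ t c = d} = (Fintype.card α - 2)! := by
  have fiber_eq : ∀ p ∈ (univ : Finset α).offDiag,
      #{t : Perm α | (t a, t c) = p} = #{t : Perm α | t a = b ∧ t c = d} := by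
    rintro ⟨b', d'⟩ hp
    obtain ⟨σ, hσb, hσd⟩ := MulAction.is_two_pretransitive_iff.mp
      (Perm.isMultiplyPretransitive α 2) (mem_offDiag.mp hp).2.2 hbd
    rw [Perm.smul_def] at hσb hσd
    refine card_nbij' (σ * ·) (σ⁻¹ * ·) (fun t ht => ?_) (fun t ht => ?_)
      (fun t _ => inv_mul_cancel_left σ t) (fun t _ => mul_inv_cancel_left σ t)
    · simp_all [Prod.ext_iff]
    · simp only [coe_filter, mem_univ, true_and, Set.mem_ofPred_eq, Perm.mul_apply,
        Prod.ext_iff] at ht ⊢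
      rw [ht.1, ht.2, ← hσb, ← hσd]; simp
  have hcard := card_eq_sum_card_fiberwise (s := univ) (t := univ.offDiag)
    (f := fun t : Perm α => (t a, t c))
    (fun t _ => by simpa using t.injective.ne hac)
  rw [sum_congr rfl fiber_eq, sum_const, offDiag_card, card_univ, card_univ,
    Fintype.card_perm, smul_eq_mul] at hcard
  obtain ⟨m, hm⟩ : ∃ m, Fintype.card α = m + 2 :=
    ⟨Fintype.card α - 2, by have := Fintype.one_lt_card_iff.mpr ⟨a, c, hac⟩; omega⟩
  rw [hm, Nat.factorial_succ, Nat.factorial_succ] at hcard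
  rw [hm, Nat.add_sub_cancel]
  have hoffDiag : (m + 2) * (m + 2) - (m + 2) = (m + 1 + 1) * (m + 1) := by
    rw [Nat.sub_eq_of_eq_add]; ring
  rw [hoffDiag] at hcard
  refine (Nat.eq_of_mul_eq_mul_left (by positivity : 0 < (m + 2) * (m + 1)) ?_).symm
  rw [← hcard]; ring

end Perm

section LinearOrder

variable {α : Type*} [LinearOrder α]

theorem swap_apply_lt_swap_apply_iff {u v a b : α} (huv : u ⋖ v) (hab : (a, b) ≠ (u, v))
    (hba : (a, b) ≠ (v, u)) : swap u v a < swap u v b ↔ a < b := by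
  have below : ∀ x, x ≠ u → (x < u ↔ x < v) := fun x hx =>
    ⟨fun h => h.trans huv.lt, fun h => (huv.le_of_lt h).lt_of_ne hx⟩
  have above : ∀ x, x ≠ v → (u < x ↔ v < x) := fun x hx =>
    ⟨fun h => (huv.ge_of_gt h).lt_of_ne hx.symm, fun h => huv.lt.trans h⟩
  have hlt := huv.lt
  rw [swap_apply_def, swap_apply_def]
  split_ifs <;> simp_all [Prod.ext_iff]

variable [Fintype α]

theorem two_mul_card_apply_lt_apply {i j : α} (hij : i ≠ j) :
    2 * #{t : Perm α | t j < t i} = (Fintype.card α)! := by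
  rw [← Fintype.card_perm, ← card_univ]
  refine two_mul_card_filter_of_involutive (f := (· * swap i j))
    (fun t => by simp [mul_assoc]) (fun _ _ => mem_univ _) (fun t _ => ?_)
  simp only [Perm.mul_apply, swap_apply_left, swap_apply_right, not_lt]
  exact lt_iff_le_and_ne.trans (and_iff_left (t.injective.ne hij))

theorem two_mul_card_lt_and_mul_inv_lt {i j u v : α} (hij : i ≠ j) (huv : u ⋖ v) (g : Perm α) :
    2 * #{t : Perm α | t j < t i ∧ (g * t⁻¹) v < (g * t⁻¹) u}
        + 2 * (Fintype.card α - 2)! * (if g j < g i then 1 else 0)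
      = #{t : Perm α | t j < t i ∧ ¬(t i = v ∧ t j = u)} + 2 * (Fintype.card α - 2)! := by
  set s : Finset (Perm α) := {t | t j < t i ∧ ¬(t i = v ∧ t j = u)}
  -- Left multiplication by `swap u v` exchanges the values of `g * t⁻¹` at `u` and `v`; as
  -- `u ⋖ v`, it preserves `t j < t i` unless `(t j, t i) = (u, v)`, which `s` excludes.
  have hflip : 2 * #{t ∈ s | (g * t⁻¹) v < (g * t⁻¹) u} = #s := by
    refine two_mul_card_filter_of_involutive (f := (swap u v * ·))
      (fun t => by simp [← mul_assoc]) (fun t ht => ?_) (fun t _ => ?_)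
    · simp only [s, mem_filter, mem_univ, true_and, Perm.mul_apply] at ht ⊢
      obtain ⟨hlt, hne⟩ := ht
      refine ⟨(swap_apply_lt_swap_apply_iff huv ?_ ?_).2 hlt, ?_⟩
      · simpa [and_comm] using hne
      · simp only [ne_eq, Prod.ext_iff, not_and]
        rintro rfl rfl; exact lt_asymm hlt huv.lt
      · rw [swap_apply_eq_iff, swap_apply_eq_iff, swap_apply_right, swap_apply_left]
        rintro ⟨hi, hj⟩; rw [hi, hj] at hlt; exact lt_asymm hlt huv.lt
    · simp only [mul_inv_rev, swap_inv, Perm.mul_apply, swap_apply_left, swap_apply_right, not_lt]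
      exact lt_iff_le_and_ne.trans (and_iff_left ((g * t⁻¹).injective.ne huv.ne))
  have hsplit : #{t : Perm α | t j < t i ∧ (g * t⁻¹) v < (g * t⁻¹) u}
      = #{t ∈ s | (g * t⁻¹) v < (g * t⁻¹) u}
        + #{t : Perm α | (t i = v ∧ t j = u) ∧ g i < g j} := by
    have hdesc : ∀ t : Perm α, t i = v ∧ t j = u → t j < t i := by
      rintro t ⟨hi, hj⟩; rw [hi, hj]; exact huv.lt
    rw [← card_filter_add_card_filter_not (fun t : Perm α => t i = v ∧ t j = u), add_comm]
    simp only [filter_filter, s]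
    congr 2
    · ext t; simp only [mem_filter, mem_univ, true_and]; tauto
    · ext t
      simp only [mem_filter, mem_univ, true_and]
      simp only [Perm.mul_apply]
      by_cases hF : t i = v ∧ t j = u
      · rw [Perm.inv_eq_iff_eq.2 hF.1.symm, Perm.inv_eq_iff_eq.2 hF.2.symm]
        simp [hF, huv.lt]
      · simp [hF]
  have hfiber : #{t : Perm α | (t i = v ∧ t j = u) ∧ g i < g j}
      = if g i < g j then (Fintype.card α - 2)! else 0 := by
    split_ifs with hg
    · simpa [hg] using card_perm_apply_eq_and_apply_eq hij huv.ne.symm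
    · simp [hg]
  have hg := lt_or_gt_of_ne (g.injective.ne hij)
  split_ifs at hfiber ⊢ <;> grind

end LinearOrder

section Descents

variable {n : ℕ}

def consecutivePairs (n : ℕ) : Finset (Fin n × Fin n) := {p | (p.2 : ℕ) = p.1 + 1}

theorem card_consecutivePairs : #(consecutivePairs n) = n - 1 := by
  rw [← card_range (n - 1)]
  refine card_nbij (fun p => p.1) (fun p hp => ?_) (fun p hp q hq hpq => ?_) (fun k hk => ?_)
  · have := (mem_filter.mp hp).2
    simp only [coe_range, Set.mem_Iio]; omega
  · have := (mem_filter.mp hp).2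
    have := (mem_filter.mp hq).2
    ext <;> simp_all
  · simp only [coe_range, Set.mem_Iio] at hk
    exact ⟨(⟨k, by omega⟩, ⟨k + 1, by omega⟩), by simp [consecutivePairs], rfl⟩

theorem covBy_of_mem_consecutivePairs {p : Fin n × Fin n} (hp : p ∈ consecutivePairs n) :
    p.1 ⋖ p.2 := by
  rw [Fin.covBy_iff, Nat.covBy_iff_add_one_eq, (mem_filter.mp hp).2]

theorem desCount_eq_sum (σ : Perm (Fin n)) :
    desCount σ = ∑ p ∈ consecutivePairs n, if σ p.2 < σ p.1 then 1 else 0 := by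
  rw [← card_filter, consecutivePairs, filter_filter]
  rfl

theorem sum_desCount : ∑ σ : Perm (Fin n), desCount σ = n.choose 2 * (n - 1)! := by
  have hdouble : 2 * ∑ σ : Perm (Fin n), desCount σ = (n - 1) * n ! := by
    simp_rw [desCount_eq_sum]
    rw [sum_comm, mul_sum]
    simp_rw [sum_boole, Nat.cast_id]
    rw [sum_congr rfl fun p hp => two_mul_card_apply_lt_apply
      (covBy_of_mem_consecutivePairs hp).ne, sum_const, card_consecutivePairs, Fintype.card_fin,
      smul_eq_mul]
  have hchoose : 2 * (n.choose 2 * (n - 1)!) = (n - 1) * n ! := by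
    rcases n with _ | m
    · simp
    · rw [Nat.choose_two_right, ← mul_assoc, mul_comm 2,
        Nat.div_mul_cancel (Nat.even_mul_pred_self _).two_dvd, Nat.factorial_succ]
      simp only [Nat.add_sub_cancel]
      ring
  omega

theorem exists_two_mul_sum_desCount_mul_desCount_add_eq (hn : 2 ≤ n) :
    ∃ c : ℕ, ∀ g : Perm (Fin n),
      2 * (∑ t, desCount (g * t⁻¹) * desCount t + (n - 1)! * desCount g) = c := by
  set P := consecutivePairs n
  have hconv : ∀ g : Perm (Fin n), ∑ t, desCount (g * t⁻¹) * desCount t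
      = ∑ q ∈ P, ∑ p ∈ P,
          #{t : Perm (Fin n) | t p.2 < t p.1 ∧ (g * t⁻¹) q.2 < (g * t⁻¹) q.1} := by
    intro g
    simp_rw [desCount_eq_sum, sum_mul_sum, card_filter]
    rw [sum_comm]
    refine sum_congr rfl fun q _ => ?_
    rw [sum_comm]
    refine sum_congr rfl fun p _ => sum_congr rfl fun t _ => ?_
    rw [ite_zero_mul_ite_zero, mul_one]
    exact if_congr and_comm rfl rfl
  refine ⟨∑ q ∈ P, ∑ p ∈ P, (#{t : Perm (Fin n) | t p.2 < t p.1 ∧ ¬(t p.1 = q.2 ∧ t p.2 = q.1)}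
    + 2 * (n - 2)!), fun g => ?_⟩
  have hdes : 2 * ((n - 1)! * desCount g)
      = ∑ q ∈ P, ∑ p ∈ P, 2 * (n - 2)! * (if g p.2 < g p.1 then 1 else 0) := by
    rw [sum_const, card_consecutivePairs, smul_eq_mul, ← mul_sum, ← desCount_eq_sum,
      ← Nat.mul_factorial_pred (by omega : n - 1 ≠ 0), Nat.sub_sub]
    ring
  rw [mul_add, hconv, hdes, mul_sum, ← sum_add_distrib]
  refine sum_congr rfl fun q hq => ?_
  rw [mul_sum, ← sum_add_distrib]
  refine sum_congr rfl fun p hp => ?_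
  simpa using two_mul_card_lt_and_mul_inv_lt (covBy_of_mem_consecutivePairs hp).ne
    (covBy_of_mem_consecutivePairs hq) g

end Descents

section GroupMatrix

variable {G R : Type*} [Group G] [Fintype G]

def groupMatrix (f : G → R) : Matrix G G R := Matrix.of fun π τ => f (π * τ⁻¹)

theorem groupMatrix_mul_groupMatrix [NonUnitalNonAssocSemiring R] (f h : G → R) :
    groupMatrix f * groupMatrix h = groupMatrix fun g => ∑ t, f (g * t⁻¹) * h t := by
  ext π τ
  exact Fintype.sum_equiv (Equiv.mulRight τ⁻¹) _ _ fun ρ => by simp [groupMatrix, mul_assoc]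

theorem groupMatrix_one_mul_groupMatrix [NonAssocSemiring R] (f : G → R) :
    groupMatrix (fun _ => (1 : R)) * groupMatrix f
      = (∑ g, f g) • groupMatrix fun _ => (1 : R) := by
  rw [groupMatrix_mul_groupMatrix]
  ext
  simp [groupMatrix]

end GroupMatrix

theorem mul_sub_smul_one_mul_add_smul_one_eq_zero {R A : Type*} [CommRing R] [Ring A]
    [Algebra R A] {D J : A} {a b c : R} (hJD : J * D = a • J) (hDD : D * D + b • D = c • J) :
    D * (D - a • 1) * (D + b • 1) = 0 :=
  calc D * (D - a • 1) * (D + b • 1) = (D * D + b • D) * (D - a • 1) := by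
        simp only [mul_sub, sub_mul, mul_add, add_mul, mul_smul_comm, smul_mul_assoc, mul_one]
        module
    _ = c • (J * D - a • J) := by rw [hDD, smul_mul_assoc, mul_sub, mul_smul_comm, mul_one]
    _ = 0 := by rw [hJD, sub_self, smul_zero]

theorem stmt_11 (n : ℕ) (hn : 3 ≤ n)
    (D : Matrix (Equiv.Perm (Fin n)) (Equiv.Perm (Fin n)) ℝ)
    (hD : ∀ π τ, D π τ = desCount (π * τ⁻¹)) :
    D * (D - ((n.choose 2 * (n - 1).factorial : ℕ) : ℝ) • 1) *
      (D + (((n - 1).factorial : ℕ) : ℝ) • 1) = 0 := by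
  obtain ⟨c, hc⟩ := exists_two_mul_sum_desCount_mul_desCount_add_eq (by omega : 2 ≤ n)
  obtain rfl : D = groupMatrix fun σ => (desCount σ : ℝ) := Matrix.ext hD
  refine mul_sub_smul_one_mul_add_smul_one_eq_zero (J := groupMatrix fun _ => (1 : ℝ))
    (c := (c : ℝ) / 2) ?_ ?_
  · rw [groupMatrix_one_mul_groupMatrix, ← sum_desCount, Nat.cast_sum]
  · rw [groupMatrix_mul_groupMatrix]
    ext π τ
    have := congrArg (Nat.cast : ℕ → ℝ) (hc (π * τ⁻¹))
    push_cast at this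
    simp only [groupMatrix, Matrix.add_apply, Matrix.smul_apply, Matrix.of_apply, smul_eq_mul,
      mul_one]
    linarith
end

section
/- Let n ≥ 3 and let i < j with j > i+1 be in {1,…,n}. Then Σ_{σ : σ⁻¹(j) = σ⁻¹(i)+1} des(σ⁻¹) = Σ_{σ : σ⁻¹(i) = σ⁻¹(j)+1} des(σ⁻¹), where both sums run over permutations σ ∈ S_n. -/
open Equiv Function

section LinearOrder

variable {β : Type*} [LinearOrder β] {x y z : β}

theorem CovBy.lt_iff_lt_of_ne (hxy : x ⋖ y) (hzy : z ≠ y) : x < z ↔ y < z :=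
  ⟨fun h ↦ (hxy.ge_of_gt h).lt_of_ne hzy.symm, hxy.lt.trans⟩

theorem CovBy.gt_iff_gt_of_ne (hxy : x ⋖ y) (hzx : z ≠ x) (hzy : z ≠ y) : z < x ↔ z < y := by
  rw [lt_iff_le_and_ne, lt_iff_le_and_ne (b := y), ← not_lt, ← not_lt, hxy.lt_iff_lt_of_ne hzy]
  exact and_congr_right fun _ ↦ by simp [hzx, hzy]

theorem lt_swap_apply_iff {α : Type*} [DecidableEq α] {f : α → β} (hf : Injective f)
    {i j a b : α} (hij : f i ⋖ f j) (hab : s(a, b) ≠ s(i, j)) :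
    f (swap i j a) < f (swap i j b) ↔ f a < f b := by
  rw [Ne, Sym2.eq_iff, not_or, not_and_or, not_and_or] at hab
  by_cases hai : a = i <;> by_cases haj : a = j <;> by_cases hbi : b = i <;>
    by_cases hbj : b = j <;> subst_vars <;>
    simp_all [swap_apply_of_ne_of_ne, hij.lt_iff_lt_of_ne, hij.gt_iff_gt_of_ne, hf.ne]

end LinearOrder

theorem desCount_mul_swap {n : ℕ} {π : Perm (Fin n)} {i j : Fin n} (hπ : π i ⋖ π j)
    (hij : (i : ℕ) + 1 ≠ j) (hji : (j : ℕ) + 1 ≠ i) :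
    desCount (π * swap i j) = desCount π := by
  refine congrArg Finset.card (Finset.filter_congr fun p _ ↦ and_congr_right fun hp ↦ ?_)
  refine lt_swap_apply_iff π.injective hπ ?_
  rw [Ne, Sym2.eq_iff]
  rintro (⟨rfl, rfl⟩ | ⟨rfl, rfl⟩) <;> omega

theorem stmt_19_general (n : ℕ) (i j : Fin n) (hij : (i : ℕ) + 1 < (j : ℕ)) :
    ∑ σ ∈ Finset.univ.filter
        (fun σ : Equiv.Perm (Fin n) => ((σ⁻¹ j : Fin n) : ℕ) = ((σ⁻¹ i : Fin n) : ℕ) + 1),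
      desCount σ⁻¹ =
    ∑ σ ∈ Finset.univ.filter
        (fun σ : Equiv.Perm (Fin n) => ((σ⁻¹ i : Fin n) : ℕ) = ((σ⁻¹ j : Fin n) : ℕ) + 1),
      desCount σ⁻¹ := by
  have inv_swap_mul : ∀ σ : Perm (Fin n), (swap i j * σ)⁻¹ = σ⁻¹ * swap i j := fun σ ↦ by
    rw [mul_inv_rev, swap_inv]
  refine Finset.sum_equiv (Equiv.mulLeft (swap i j)) (fun σ ↦ ?_) (fun σ hσ ↦ ?_)
  · simp only [Finset.mem_filter, Finset.mem_univ, true_and, coe_mulLeft, inv_swap_mul,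
      Perm.mul_apply, swap_apply_left, swap_apply_right]
  · have hcov : σ⁻¹ i ⋖ σ⁻¹ j := by
      simpa [Fin.covBy_iff, eq_comm] using (Finset.mem_filter.mp hσ).2
    rw [coe_mulLeft, inv_swap_mul, desCount_mul_swap hcov (by omega) (by omega)]

theorem stmt_19 (n : ℕ) (hn : 3 ≤ n) (i j : Fin n) (hij : (i : ℕ) + 1 < (j : ℕ)) :
    ∑ σ ∈ Finset.univ.filter
        (fun σ : Equiv.Perm (Fin n) => ((σ⁻¹ j : Fin n) : ℕ) = ((σ⁻¹ i : Fin n) : ℕ) + 1),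
      desCount σ⁻¹ =
    ∑ σ ∈ Finset.univ.filter
        (fun σ : Equiv.Perm (Fin n) => ((σ⁻¹ i : Fin n) : ℕ) = ((σ⁻¹ j : Fin n) : ℕ) + 1),
      desCount σ⁻¹ :=
  stmt_19_general n i j hij
end
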